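/- Let F be a field, m and E finite types, and D a matrix over F with rows indexed by m and columns indexed by E; for S ⊆ E let r(S) be the rank of the submatrix of columns in S, and let T_D(X,Y) = Σ_{S ⊆ E} X^{r(E) − r(S)} · Y^{|S| − r(S)}. Define R_D(λ) = Σ_{S ⊆ E} (−1)^{|E| − |S|} · λ^{|S| − r(S)} ∈ ℤ[λ]. Then R_D(λ) = (−1)^{|E| − r(E)} · T_D(−1, −λ), i.e., R_D equals (−1)^{|E|−r(E)} times the polynomial obtained from T_D by substituting X = −1 and Y = −λ. -/

import Mathlib

open MvPolynomial

/-- The rank of the submatrix of `D` consisting of the columns indexed by `S`. -/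
noncomputable def colRank {F : Type*} [Field F] {m E : Type*} [Fintype m]
    (D : Matrix m E F) (S : Finset E) : ℕ :=
  Module.finrank F (Submodule.span F ((fun σ i => D i σ) '' (S : Set E)))

/-- The corank–nullity (Tutte–Krushkal–Renardy) polynomial of the matrix `D`:
`T_D(X,Y) = Σ_{S ⊆ E} X^(r(E) − r(S)) · Y^(|S| − r(S))`. -/
noncomputable def tutteKR {F : Type*} [Field F] {m E : Type*} [Fintype m] [Fintype E]
    (D : Matrix m E F) : MvPolynomial (Fin 2) ℤ :=
  ∑ S : Finset E,
    X 0 ^ (colRank D Finset.univ - colRank D S) * X 1 ^ (S.card - colRank D S)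

/-- The Bott polynomial of the matrix `D`:
`R_D(λ) = Σ_{S ⊆ E} (−1)^(|E| − |S|) · λ^(|S| − r(S)) ∈ ℤ[λ]`. -/
noncomputable def bott {F : Type*} [Field F] {m E : Type*} [Fintype m] [Fintype E]
    (D : Matrix m E F) : Polynomial ℤ :=
  ∑ S : Finset E,
    (-1 : Polynomial ℤ) ^ (Fintype.card E - S.card) *
      Polynomial.X ^ (S.card - colRank D S)

lemma colRank_le_card {F : Type*} [Field F] {m E : Type*} [Fintype m]
    (D : Matrix m E F) (S : Finset E) : colRank D S ≤ S.card := by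
  unfold colRank
  rw [Set.image_eq_range]
  exact (finrank_range_le_card _).trans_eq (Fintype.card_coe S)

lemma colRank_mono {F : Type*} [Field F] {m E : Type*} [Fintype m]
    (D : Matrix m E F) {S T : Finset E} (hST : S ⊆ T) : colRank D S ≤ colRank D T :=
  Submodule.finrank_mono (Submodule.span_mono (Set.image_mono (Finset.coe_subset.2 hST)))

-- The hypotheses rule out truncated subtraction; the exponents of `-1` on the two sides then
-- differ by the even number `2 (s - r)`.
lemma neg_one_pow_tsub_mul_pow {R : Type*} [Ring R] (x : R) {e rE s r : ℕ}
    (hr : r ≤ s) (hs : s ≤ e) (hrE : r ≤ rE) (hE : rE ≤ e) :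
    (-1) ^ (e - s) * x ^ (s - r) = (-1) ^ (e - rE) * ((-1) ^ (rE - r) * (-x) ^ (s - r)) := by
  have hexp : (e - rE) + (rE - r) + (s - r) = (e - s) + 2 * (s - r) := by omega
  rw [neg_pow x, ← mul_assoc, ← mul_assoc, ← pow_add, ← pow_add, hexp, pow_add, pow_mul,
    neg_one_sq, one_pow, mul_one]

/-- `R_D(λ) = (−1)^(|E| − r(E)) · T_D(−1, −λ)`. -/
theorem statement4 {F : Type*} [Field F] {m E : Type*} [Fintype m] [Fintype E]
    (D : Matrix m E F) :
    bott D = (-1 : Polynomial ℤ) ^ (Fintype.card E - colRank D Finset.univ) *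
      MvPolynomial.eval₂ (Int.castRingHom (Polynomial ℤ))
        ![(-1 : Polynomial ℤ), -Polynomial.X] (tutteKR D) := by
  have hE : colRank D Finset.univ ≤ Fintype.card E :=
    (colRank_le_card D _).trans_eq Finset.card_univ
  rw [bott, tutteKR, eval₂_sum, Finset.mul_sum]
  refine Finset.sum_congr rfl fun S _ => ?_
  simp only [eval₂_mul, eval₂_pow, eval₂_X, Matrix.cons_val_zero, Matrix.cons_val_one]
  exact neg_one_pow_tsub_mul_pow _ (colRank_le_card D S) (Finset.card_le_univ S)
    (colRank_mono D (Finset.subset_univ S)) hE
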